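/- arXiv:2004.03596 — 8 statements merged into one kernel-verified Lean document; each statement's English description precedes it below -/
import Mathlib

section
/- For every positive integer n, the number of partitions of n that contain exactly one even part value (which may be repeated any number of times) equals the difference between the total number of parts counted over all partitions of n into odd parts and the total number of parts counted over all partitions of n into distinct parts. -/
/-!
Write `Q m` for the number of odd partitions of `m`; the sums below run over `j, t ≥ 1` with
`t j ≤ n`. Deleting `t` copies of the part `j` identifies the odd partitions of `n` in which an odd
`j` occurs at least `t` times, and the partitions of `n` whose even parts are exactly `t` copies of
an even `j`, with the odd partitions of `n - t j`. So the left side is `∑ [j even] Q (n - t j)` and,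
counting the parts equal to `j` as the number of `t ≤ count j`, the total number of parts of odd
partitions is `∑ [j odd] Q (n - t j)`. The number `f m` of distinct partitions of `m` containing `j`
satisfies `f m + f (m - j) = Q (m - j)` by Euler's theorem, so the total number of parts of distinct
partitions is `∑ (-1)^(t+1) Q (n - t j)`. Exchanging `j` and `t` in this sum, the identity reduces
to `[j odd] - (-1)^(j+1) = [j even]`.
-/

open Finset

theorem eq_sum_Icc_neg_one_pow_mul {f g : ℕ → ℤ} {j : ℕ} (hj : 0 < j) (hlt : ∀ n < j, f n = 0)
    (hrec : ∀ n, j ≤ n → f n = g (n - j) - f (n - j)) (n : ℕ) :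
    f n = ∑ t ∈ Icc 1 n, (-1) ^ (t + 1) * if t * j ≤ n then g (n - t * j) else 0 := by
  let G (n t : ℕ) : ℤ := if t * j ≤ n then g (n - t * j) else 0
  have hshift (n t : ℕ) (hjn : j ≤ n) : G n (t + 1 + 1) = G (n - j) (t + 1) := by
    have : (t + 1 + 1) * j = (t + 1) * j + j := by ring
    simp only [G, this]
    grind
  -- Summing up to any `N ≥ n` already catches every nonzero term, so induction on `N` works.
  have key (N n : ℕ) (hn : n ≤ N) : f n = ∑ t ∈ range N, (-1) ^ (t + 1 + 1) * G n (t + 1) := by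
    induction N generalizing n with
    | zero => simp [hlt n (by omega)]
    | succ N ih =>
      by_cases hjn : j ≤ n
      · have hfirst : G n 1 = g (n - j) := by simp [G, hjn]
        rw [sum_range_succ', hrec n hjn, ih (n - j) (by omega), hfirst, sub_eq_neg_add,
          ← sum_neg_distrib]
        congr 1
        · exact sum_congr rfl fun t _ => by rw [hshift n t hjn]; ring
        · ring
      · rw [hlt n (by omega)]
        refine (sum_eq_zero fun t _ => ?_).symm
        have : j ≤ (t + 1) * j := Nat.le_mul_of_pos_left j t.succ_pos
        simp only [G, if_neg (show ¬(t + 1) * j ≤ n by omega), mul_zero]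
  rw [key n n le_rfl, range_eq_Ico, sum_Ico_add' (fun t => (-1) ^ (t + 1) * G n t) 0 n 1,
    zero_add, Ico_add_one_right_eq_Icc]

namespace Nat.Partition

variable {n : ℕ}

theorem card_parts_le (p : n.Partition) : Multiset.card p.parts ≤ n := by
  simpa [p.parts_sum] using Multiset.card_nsmul_le_sum (a := 1) fun _ hi => p.parts_pos hi

theorem sum_parts_sub_add_sum (p : n.Partition) {s : Multiset ℕ} (h : s ≤ p.parts) :
    (p.parts - s).sum + s.sum = n := by
  rw [← Multiset.sum_add, tsub_add_cancel_of_le h, p.parts_sum]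

theorem card_filter_le_parts (s : Multiset ℕ) (hs : ∀ i ∈ s, 0 < i) (P : Multiset ℕ → Prop)
    [DecidablePred P] :
    #{p : n.Partition | s ≤ p.parts ∧ P (p.parts - s)} =
      if s.sum ≤ n then #{q : (n - s.sum).Partition | P q.parts} else 0 := by
  split_ifs with h
  · refine card_bij' (fun p hp => ⟨p.parts - s, fun hi => p.parts_pos (Multiset.mem_of_le
        (Multiset.sub_le_self _ _) hi), ?_⟩) (fun q _ => ⟨q.parts + s, ?_, ?_⟩) ?_ ?_ ?_ ?_
    · have := p.sum_parts_sub_add_sum (mem_filter.1 hp).2.1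
      omega
    · grind
    · rw [Multiset.sum_add, q.parts_sum]
      omega
    · intro p hp
      simpa using (mem_filter.1 hp).2.2
    · intro q hq
      simpa using (mem_filter.1 hq).2
    · intro p hp
      exact Nat.Partition.ext (tsub_add_cancel_of_le (mem_filter.1 hp).2.1)
    · intro q _
      exact Nat.Partition.ext (add_tsub_cancel_right _ _)
  · rw [Finset.card_eq_zero, filter_eq_empty_iff]
    rintro p - ⟨hle, -⟩
    have := p.sum_parts_sub_add_sum hle
    omega

theorem sum_card_parts_eq_sum_card_filter_le_count (s : Finset n.Partition) :
    ∑ p ∈ s, Multiset.card p.parts =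
      ∑ j ∈ Icc 1 n, ∑ t ∈ Icc 1 n, #{p ∈ s | t ≤ p.parts.count j} := by
  have hcount (p : n.Partition) (j : ℕ) :
      p.parts.count j = ∑ t ∈ Icc 1 n, if t ≤ p.parts.count j then 1 else 0 := by
    have hle := (Multiset.count_le_card j p.parts).trans p.card_parts_le
    rw [← card_filter, show {t ∈ Icc 1 n | t ≤ p.parts.count j} = Icc 1 (p.parts.count j) by
      ext; simp only [mem_filter, mem_Icc]; omega, Nat.card_Icc, Nat.add_sub_cancel]
  have hcard (p : n.Partition) : Multiset.card p.parts = ∑ j ∈ Icc 1 n, p.parts.count j :=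
    (Multiset.sum_count_eq_card fun j hj => mem_Icc.2 ⟨p.parts_pos hj, le_of_mem_parts hj⟩).symm
  calc ∑ p ∈ s, Multiset.card p.parts
      = ∑ p ∈ s, ∑ j ∈ Icc 1 n, ∑ t ∈ Icc 1 n, if t ≤ p.parts.count j then 1 else 0 :=
        sum_congr rfl fun p _ => (hcard p).trans (sum_congr rfl fun j _ => hcount p j)
    _ = _ := by
        simp only [card_filter]
        rw [sum_comm]
        exact sum_congr rfl fun j _ => sum_comm

theorem card_toFinset_filter_eq_one_iff (P : ℕ → Prop) [DecidablePred P] (p : n.Partition) :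
    #(p.parts.toFinset.filter P) = 1 ↔
      ∃ j ∈ Icc 1 n, ∃ t ∈ Icc 1 n, p.parts.filter P = Multiset.replicate t j := by
  rw [← Multiset.toFinset_filter, card_eq_one]
  simp only [Multiset.toFinset_eq_singleton_iff, Multiset.nsmul_singleton]
  constructor
  · rintro ⟨j, hcard, heq⟩
    have hj : j ∈ p.parts.filter P := by
      rw [heq]
      exact Multiset.mem_replicate.2 ⟨hcard, rfl⟩
    replace hj := Multiset.mem_of_mem_filter hj
    have := (Multiset.card_le_card (Multiset.filter_le P p.parts)).trans p.card_parts_le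
    exact ⟨j, mem_Icc.2 ⟨p.parts_pos hj, le_of_mem_parts hj⟩, _, mem_Icc.2 ⟨by omega, this⟩, heq⟩
  · rintro ⟨j, -, t, ht, heq⟩
    refine ⟨j, ?_, ?_⟩ <;> rw [heq, Multiset.card_replicate]
    exact Nat.one_le_iff_ne_zero.1 (mem_Icc.1 ht).1

theorem card_filter_card_toFinset_filter_eq_one (P : ℕ → Prop) [DecidablePred P] :
    #{p : n.Partition | #(p.parts.toFinset.filter P) = 1} =
      ∑ j ∈ Icc 1 n, ∑ t ∈ Icc 1 n,
        #{p : n.Partition | p.parts.filter P = Multiset.replicate t j} := by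
  have hunion : ({p : n.Partition | #(p.parts.toFinset.filter P) = 1} : Finset _) =
      (Icc 1 n ×ˢ Icc 1 n).biUnion
        fun q => {p : n.Partition | p.parts.filter P = Multiset.replicate q.2 q.1} := by
    ext p
    simp [card_toFinset_filter_eq_one_iff]
  rw [hunion, card_biUnion, sum_product]
  intro q hq q' hq' hne
  refine disjoint_left.2 fun p hp hp' => hne ?_
  have heq := (mem_filter.1 hp).2.symm.trans (mem_filter.1 hp').2
  have ht : q.2 = q'.2 := by simpa using congrArg Multiset.card heq
  have ht' := (mem_Icc.1 (mem_product.1 (mem_coe.1 hq')).2).1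
  rw [ht, Multiset.replicate_right_inj (by omega)] at heq
  exact Prod.ext heq ht

/-- `#(odds (n - k))`, cut off to `0` for `k > n`, where truncated subtraction would give
`#(odds 0) = 1`. -/
def cardOddsSub (n k : ℕ) : ℤ := if k ≤ n then #(odds (n - k)) else 0

theorem natCast_card_filter_odds_le_count (j : ℕ) {t : ℕ} (ht : 0 < t) :
    (#{p ∈ odds n | t ≤ p.parts.count j} : ℤ) = if Even j then 0 else cardOddsSub n (t * j) := by
  split_ifs with hj
  · rw [Nat.cast_eq_zero, Finset.card_eq_zero, filter_eq_empty_iff]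
    intro p hp hcount
    exact (mem_filter.1 hp).2 j (Multiset.count_pos.1 (ht.trans_le hcount)) hj
  · have hfilter : ({p ∈ odds n | t ≤ p.parts.count j} : Finset n.Partition) =
        ({p : n.Partition | Multiset.replicate t j ≤ p.parts ∧
          ∀ i ∈ p.parts - Multiset.replicate t j, ¬Even i} : Finset _) := by
      ext p
      simp only [odds, restricted, filter_filter, mem_filter, mem_univ, true_and,
        Multiset.le_count_iff_replicate_le]
      constructor
      · rintro ⟨hodd, hle⟩
        exact ⟨hle, fun i hi => hodd i (Multiset.mem_of_le (Multiset.sub_le_self _ _) hi)⟩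
      · rintro ⟨hle, hodd⟩
        refine ⟨fun i hi => ?_, hle⟩
        rw [← tsub_add_cancel_of_le hle, Multiset.mem_add] at hi
        exact hi.elim (hodd i) fun hi => Multiset.eq_of_mem_replicate hi ▸ hj
    have hpos : ∀ i ∈ Multiset.replicate t j, 0 < i := fun i hi =>
      Multiset.eq_of_mem_replicate hi ▸ (Nat.not_even_iff_odd.1 hj).pos
    rw [hfilter, card_filter_le_parts _ hpos (fun q => ∀ i ∈ q, ¬Even i),
      Multiset.sum_replicate, smul_eq_mul, cardOddsSub]
    split_ifs <;> rfl

theorem natCast_card_filter_even_eq_replicate {j t : ℕ} (hj : 0 < j) (ht : 0 < t) :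
    (#{p : n.Partition | p.parts.filter Even = Multiset.replicate t j} : ℤ) =
      if Even j then cardOddsSub n (t * j) else 0 := by
  split_ifs with he
  · have hfilter : ({p : n.Partition | p.parts.filter Even = Multiset.replicate t j} : Finset _) =
        ({p : n.Partition | Multiset.replicate t j ≤ p.parts ∧
          ∀ i ∈ p.parts - Multiset.replicate t j, ¬Even i} : Finset _) := by
      ext p
      simp only [mem_filter, mem_univ, true_and]
      constructor
      · intro h
        refine ⟨h ▸ Multiset.filter_le _ _, fun i hi hi' => ?_⟩
        rw [← h, ← Multiset.count_pos, Multiset.count_sub, Multiset.count_filter_of_pos hi'] at hi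
        omega
      · rintro ⟨hle, hodd⟩
        rw [← tsub_add_cancel_of_le hle, Multiset.filter_add, Multiset.filter_eq_nil.2 hodd,
          Multiset.filter_eq_self.2 fun i hi => Multiset.eq_of_mem_replicate hi ▸ he, zero_add]
    rw [hfilter, card_filter_le_parts _ (fun i hi => Multiset.eq_of_mem_replicate hi ▸ hj)
      (fun q => ∀ i ∈ q, ¬Even i), Multiset.sum_replicate, smul_eq_mul, cardOddsSub]
    split_ifs <;> rfl
  · rw [Nat.cast_eq_zero, Finset.card_eq_zero, filter_eq_empty_iff]
    intro p _ h
    have : j ∈ p.parts.filter Even := h ▸ Multiset.mem_replicate.2 ⟨ht.ne', rfl⟩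
    exact he (Multiset.of_mem_filter this)

theorem card_filter_distincts_mem {j : ℕ} (hj : 0 < j) (h : j ≤ n) :
    #{p ∈ distincts n | j ∈ p.parts} = #{q ∈ distincts (n - j) | j ∉ q.parts} := by
  have hfilter : ({p ∈ distincts n | j ∈ p.parts} : Finset n.Partition) =
      ({p : n.Partition | {j} ≤ p.parts ∧ ((p.parts - {j}).Nodup ∧ j ∉ p.parts - {j})} :
        Finset _) := by
    ext p
    simp only [distincts, filter_filter, mem_filter, mem_univ, true_and, Multiset.singleton_le,
      Multiset.sub_singleton]
    constructor
    · rintro ⟨hnd, hj⟩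
      rw [← Multiset.cons_erase hj, Multiset.nodup_cons] at hnd
      exact ⟨hj, hnd.2, hnd.1⟩
    · rintro ⟨hj, hnd, hj'⟩
      refine ⟨?_, hj⟩
      rw [← Multiset.cons_erase hj, Multiset.nodup_cons]
      exact ⟨hj', hnd⟩
  rw [hfilter, card_filter_le_parts {j} (by simpa using hj) (fun q => q.Nodup ∧ j ∉ q),
    Multiset.sum_singleton, if_pos h, distincts, filter_filter]

theorem natCast_card_filter_distincts_mem {j : ℕ} (hj : 0 < j) :
    (#{p ∈ distincts n | j ∈ p.parts} : ℤ) =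
      ∑ t ∈ Icc 1 n, (-1) ^ (t + 1) * cardOddsSub n (t * j) := by
  refine eq_sum_Icc_neg_one_pow_mul (f := fun m => #{p ∈ distincts m | j ∈ p.parts})
    (g := fun m => #(odds m)) hj (fun m hm => ?_) (fun m hm => ?_) n
  · rw [Nat.cast_eq_zero, Finset.card_eq_zero, filter_eq_empty_iff]
    exact fun p _ hp => absurd (le_of_mem_parts hp) (by omega)
  · rw [card_filter_distincts_mem hj hm, card_odds_eq_card_distincts, eq_sub_iff_add_eq',
      ← Nat.cast_add, card_filter_add_card_filter_not]

theorem natCast_sum_card_parts_odds :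
    ∑ p ∈ odds n, (Multiset.card p.parts : ℤ) =
      ∑ j ∈ Icc 1 n, ∑ t ∈ Icc 1 n, if Even j then 0 else cardOddsSub n (t * j) := by
  rw [← Nat.cast_sum, sum_card_parts_eq_sum_card_filter_le_count]
  push_cast
  exact sum_congr rfl fun j _ => sum_congr rfl fun t ht =>
    natCast_card_filter_odds_le_count j (mem_Icc.1 ht).1

theorem natCast_sum_card_parts_distincts :
    ∑ p ∈ distincts n, (Multiset.card p.parts : ℤ) =
      ∑ j ∈ Icc 1 n, ∑ t ∈ Icc 1 n, (-1) ^ (t + 1) * cardOddsSub n (t * j) := by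
  rw [← Nat.cast_sum, sum_card_parts_eq_sum_card_filter_le_count, Nat.cast_sum]
  refine sum_congr rfl fun j hj => ?_
  have hj1 := (mem_Icc.1 hj).1
  rw [← natCast_card_filter_distincts_mem hj1,
    sum_eq_single_of_mem 1 (mem_Icc.2 ⟨le_rfl, hj1.trans (mem_Icc.1 hj).2⟩) fun t ht ht1 => ?_]
  · simp only [Multiset.one_le_count_iff_mem]
  · rw [Finset.card_eq_zero, filter_eq_empty_iff]
    intro p hp hcount
    have := Multiset.nodup_iff_count_le_one.1 (mem_filter.1 hp).2 j
    have := (mem_Icc.1 ht).1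
    omega

theorem natCast_card_filter_card_toFinset_filter_even_eq_one :
    (#{p : n.Partition | #(p.parts.toFinset.filter Even) = 1} : ℤ) =
      ∑ j ∈ Icc 1 n, ∑ t ∈ Icc 1 n, if Even j then cardOddsSub n (t * j) else 0 := by
  rw [card_filter_card_toFinset_filter_eq_one]
  push_cast
  exact sum_congr rfl fun j hj => sum_congr rfl fun t ht =>
    natCast_card_filter_even_eq_replicate (mem_Icc.1 hj).1 (mem_Icc.1 ht).1

end Nat.Partition

open Nat.Partition

open scoped Classical in
theorem one_even_part_count_general (n : ℕ) :
    ((Finset.univ.filter fun p : n.Partition =>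
        (p.parts.toFinset.filter fun i => Even i).card = 1).card : ℤ) =
      (∑ p ∈ Nat.Partition.odds n, (Multiset.card p.parts : ℤ)) -
        ∑ p ∈ Nat.Partition.distincts n, (Multiset.card p.parts : ℤ) := by
  rw [natCast_card_filter_card_toFinset_filter_even_eq_one, natCast_sum_card_parts_odds,
    natCast_sum_card_parts_distincts,
    sum_comm (f := fun j t => (-1 : ℤ) ^ (t + 1) * cardOddsSub n (t * j)), ← sum_sub_distrib]
  refine sum_congr rfl fun j _ => ?_
  rw [← sum_sub_distrib]
  refine sum_congr rfl fun t _ => ?_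
  rw [mul_comm j t]
  rcases Nat.even_or_odd j with h | h
  · simp [h, pow_succ, h.neg_one_pow]
  · simp [Nat.not_even_iff_odd.2 h, pow_succ, h.neg_one_pow]

open scoped Classical in
theorem one_even_part_count (n : ℕ) (hn : 0 < n) :
    ((Finset.univ.filter fun p : n.Partition =>
        (p.parts.toFinset.filter fun i => Even i).card = 1).card : ℤ) =
      (∑ p ∈ Nat.Partition.odds n, (Multiset.card p.parts : ℤ)) -
        ∑ p ∈ Nat.Partition.distincts n, (Multiset.card p.parts : ℤ) :=
  one_even_part_count_general n
end

section
/- For every positive integer n, the number of partitions of n in which exactly one part appears exactly three times and every other part appears exactly once equals the difference between the total number of parts counted over all partitions of n into distinct parts and the total number of distinct part values counted over all partitions of n into odd parts. -/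
/-!
Sort the partitions on the left, and the parts of the distinct partitions, by the distinguished
part `k`. Removing the copies of `k` matches them with distinct partitions of `n - 3k`,
resp. `n - k`, that avoid `k`. If `a m` counts the distinct partitions of `m` avoiding `k`, then
`a m + a (m - k)` counts all distinct partitions of `m`, so the contribution of `k` to the
difference is `dist (n - k) - dist (n - 2k)`. Summed over `k` the even shifts cancel, leaving
`∑_{k odd} dist (n - k)`, which by Euler's theorem is `∑_{k odd} odd (n - k)`: the number of pairs
of an odd partition of `n` and one of its part values, counted by removing one copy of that part.
-/

open Finset

theorem Multiset.count_mul_le_sum (s : Multiset ℕ) (k : ℕ) : s.count k * k ≤ s.sum := by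
  obtain ⟨t, ht⟩ :=
    Multiset.le_iff_exists_add.mp (Multiset.le_count_iff_replicate_le.mp (le_refl (s.count k)))
  calc s.count k * k = (Multiset.replicate (s.count k) k).sum := by simp
    _ ≤ (Multiset.replicate (s.count k) k + t).sum := by simp
    _ = s.sum := by rw [← ht]

theorem Multiset.nodup_iff_count_le_one_and_nodup_filter_ne {α : Type*} [DecidableEq α]
    (s : Multiset α) (k : α) :
    s.Nodup ↔ s.count k ≤ 1 ∧ (s.filter (· ≠ k)).Nodup := by
  simp only [Multiset.nodup_iff_count_le_one, Multiset.count_filter]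
  refine ⟨fun h => ⟨h k, fun a => ?_⟩, fun ⟨hk, h⟩ a => ?_⟩
  · split_ifs <;> simp [h a]
  · by_cases ha : a = k
    · exact ha ▸ hk
    · simpa [ha] using h a

theorem Finset.sum_Icc_eq_sum_odd_add_sum_double {M : Type*} [AddCommMonoid M]
    (f : ℕ → M) (n : ℕ) :
    ∑ k ∈ Icc 1 n, f k =
      ∑ k ∈ Icc 1 n with ¬Even k, f k + ∑ k ∈ Icc 1 n, if 2 * k ≤ n then f (2 * k) else 0 := by
  rw [← sum_filter_add_sum_filter_not (Icc 1 n) (¬Even ·), ← sum_filter]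
  congr 1
  refine sum_nbij' (· / 2) (2 * ·) ?_ ?_ ?_ ?_ ?_ <;>
    simp only [mem_filter, mem_Icc, not_not, Nat.even_iff] <;> intro k hk
  all_goals first | omega | congr 1; omega

namespace Nat.Partition

variable {n k : ℕ}

theorem card_filter_mem_parts_and (P : Multiset ℕ → Prop) [DecidablePred P]
    (hk : 1 ≤ k) (hkn : k ≤ n) :
    #{p : n.Partition | k ∈ p.parts ∧ P p.parts} =
      #{q : (n - k).Partition | P (k ::ₘ q.parts)} := by
  simp only [← Fintype.card_subtype]
  refine Fintype.card_congr <| (Equiv.subtypeSubtypeEquivSubtypeInter _ _).symm.trans <|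
    (partitionWithPartEquiv hk hkn).subtypeEquiv fun p => ?_
  rw [partitionWithPartEquiv_apply_parts, Multiset.cons_erase p.2]

def distinctsExcept (n k c : ℕ) : Finset n.Partition :=
  {p | p.parts.count k = c ∧ (p.parts.filter (· ≠ k)).Nodup}

theorem card_distinctsExcept_succ (c : ℕ) (hk : 1 ≤ k) (hkn : k ≤ n) :
    #(distinctsExcept n k (c + 1)) = #(distinctsExcept (n - k) k c) := by
  have hmem (p : n.Partition) (h : p.parts.count k = c + 1) : k ∈ p.parts :=
    Multiset.count_pos.mp (by omega)
  rw [distinctsExcept, filter_congr fun p _ => (and_iff_right_of_imp (hmem p ·.1)).symm,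
    card_filter_mem_parts_and (fun s => s.count k = c + 1 ∧ (s.filter (· ≠ k)).Nodup) hk hkn,
    distinctsExcept]
  simp [Multiset.filter_cons_of_neg]

theorem card_distinctsExcept_eq_zero {c : ℕ} (h : n < c * k) : #(distinctsExcept n k c) = 0 := by
  refine Finset.card_eq_zero.mpr <| filter_eq_empty_iff.mpr fun p _ ⟨hc, _⟩ => ?_
  have := Multiset.count_mul_le_sum p.parts k
  rw [hc, p.parts_sum] at this
  omega

theorem card_distinctsExcept_zero_add_one (n k : ℕ) :
    #(distinctsExcept n k 0) + #(distinctsExcept n k 1) = #(distincts n) := by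
  have hdisj : Disjoint (distinctsExcept n k 0) (distinctsExcept n k 1) :=
    Finset.disjoint_filter.mpr fun _ _ h0 h1 => zero_ne_one (h0.1.symm.trans h1.1)
  rw [← card_union_of_disjoint hdisj, distinctsExcept, distinctsExcept, ← filter_or, distincts]
  congr 1
  ext p
  simp only [mem_filter, mem_univ, true_and, p.parts.nodup_iff_count_le_one_and_nodup_filter_ne k]
  constructor
  · rintro (⟨h, hf⟩ | ⟨h, hf⟩) <;> exact ⟨by omega, hf⟩
  · rintro ⟨h, hf⟩
    rcases Nat.le_one_iff_eq_zero_or_eq_one.mp h with h | h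
    exacts [Or.inl ⟨h, hf⟩, Or.inr ⟨h, hf⟩]

theorem card_distinctsExcept_zero_add_sub (hk : 1 ≤ k) (hkn : k ≤ n) :
    #(distinctsExcept n k 0) + #(distinctsExcept (n - k) k 0) = #(distincts n) := by
  rw [← card_distinctsExcept_succ 0 hk hkn, card_distinctsExcept_zero_add_one]

theorem card_distinctsExcept_zero_of_lt (h : n < k) :
    #(distinctsExcept n k 0) = #(distincts n) := by
  rw [← card_distinctsExcept_zero_add_one n k,
    card_distinctsExcept_eq_zero (by omega : n < 1 * k), add_zero]

theorem card_distinctsExcept_one_add_eq_three_add (hk : 1 ≤ k) (hkn : k ≤ n) :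
    #(distinctsExcept n k 1) + (if 2 * k ≤ n then #(distincts (n - 2 * k)) else 0) =
      #(distinctsExcept n k 3) + #(distincts (n - k)) := by
  rw [card_distinctsExcept_succ 0 hk hkn]
  split_ifs with h2
  · have hsplit₁ := card_distinctsExcept_zero_add_sub hk (by omega : k ≤ n - k)
    rw [show n - k - k = n - 2 * k by omega] at hsplit₁
    by_cases h3 : 3 * k ≤ n
    · have hsplit₂ := card_distinctsExcept_zero_add_sub hk (by omega : k ≤ n - 2 * k)
      have hthree : #(distinctsExcept n k 3) = #(distinctsExcept (n - 2 * k - k) k 0) := by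
        rw [card_distinctsExcept_succ 2 hk hkn,
          card_distinctsExcept_succ 1 hk (by omega : k ≤ n - k),
          card_distinctsExcept_succ 0 hk (by omega : k ≤ n - k - k),
          show n - k - k - k = n - 2 * k - k by omega]
      omega
    · have hsplit₂ := card_distinctsExcept_zero_of_lt (by omega : n - 2 * k < k)
      rw [card_distinctsExcept_eq_zero (by omega : n < 3 * k)]
      omega
  · rw [card_distinctsExcept_eq_zero (by omega : n < 3 * k),
      card_distinctsExcept_zero_of_lt (by omega : n - k < k), add_comm]

theorem sum_card_toFinset_parts (s : Finset n.Partition) :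
    ∑ p ∈ s, #p.parts.toFinset = ∑ k ∈ Icc 1 n, #{p ∈ s | k ∈ p.parts} := by
  calc ∑ p ∈ s, #p.parts.toFinset = ∑ p ∈ s, #{k ∈ Icc 1 n | k ∈ p.parts} := by
        refine sum_congr rfl fun p _ => congrArg card ?_
        ext k
        simpa using fun h => ⟨p.parts_pos h, p.le_of_mem_parts h⟩
    _ = _ := by simp only [card_filter]; exact sum_comm

theorem filter_mem_parts_distincts (n k : ℕ) :
    {p ∈ distincts n | k ∈ p.parts} = distinctsExcept n k 1 := by
  ext p
  simp only [distincts, distinctsExcept, filter_filter, mem_filter, mem_univ, true_and,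
    p.parts.nodup_iff_count_le_one_and_nodup_filter_ne k, ← Multiset.count_pos]
  constructor
  · rintro ⟨⟨h, hf⟩, hk⟩; exact ⟨by omega, hf⟩
  · rintro ⟨h, hf⟩; exact ⟨⟨by omega, hf⟩, by omega⟩

theorem sum_card_parts_distincts (n : ℕ) :
    ∑ p ∈ distincts n, Multiset.card p.parts = ∑ k ∈ Icc 1 n, #(distinctsExcept n k 1) := by
  calc ∑ p ∈ distincts n, Multiset.card p.parts = ∑ p ∈ distincts n, #p.parts.toFinset :=
        sum_congr rfl fun p hp => (Multiset.toFinset_card_of_nodup (mem_filter.mp hp).2).symm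
    _ = _ := by simp only [sum_card_toFinset_parts, filter_mem_parts_distincts]

theorem card_filter_mem_parts_odds (hk : 1 ≤ k) (hkn : k ≤ n) (hodd : ¬Even k) :
    #{p ∈ odds n | k ∈ p.parts} = #(odds (n - k)) := by
  rw [odds, restricted, filter_filter, filter_congr fun p _ => and_comm,
    card_filter_mem_parts_and (fun s => ∀ i ∈ s, ¬Even i) hk hkn, odds, restricted]
  simp only [Multiset.mem_cons, forall_eq_or_imp, hodd, not_false_eq_true, true_and]

theorem sum_card_toFinset_parts_odds (n : ℕ) :
    ∑ p ∈ odds n, #p.parts.toFinset = ∑ k ∈ Icc 1 n with ¬Even k, #(distincts (n - k)) := by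
  rw [sum_card_toFinset_parts, ← sum_filter_of_ne (p := (¬Even ·))]
  · refine sum_congr rfl fun k hk => ?_
    obtain ⟨hk, hodd⟩ := mem_filter.mp hk
    rw [card_filter_mem_parts_odds (mem_Icc.mp hk).1 (mem_Icc.mp hk).2 hodd,
      card_odds_eq_card_distincts]
  · intro k _ hne heven
    refine hne <| Finset.card_eq_zero.mpr <| filter_eq_empty_iff.mpr fun p hp hk => ?_
    exact (mem_filter.mp hp).2 k hk heven

open scoped Classical in
theorem card_filter_exists_count_eq_three (n : ℕ) :
    #{p : n.Partition | ∃ x ∈ p.parts, p.parts.count x = 3 ∧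
        ∀ y ∈ p.parts, y ≠ x → p.parts.count y = 1} =
      ∑ k ∈ Icc 1 n, #(distinctsExcept n k 3) := by
  rw [← card_biUnion]
  · congr 1
    ext p
    simp only [distinctsExcept, mem_biUnion, mem_filter, mem_univ, true_and, mem_Icc,
      Multiset.nodup_iff_count_eq_one, Multiset.mem_filter, Multiset.count_filter]
    constructor
    · rintro ⟨x, hx, h3, h1⟩
      refine ⟨x, ⟨p.parts_pos hx, p.le_of_mem_parts hx⟩, h3, fun y ⟨hy, hyx⟩ => ?_⟩
      simp [hyx, h1 y hy hyx]
    · rintro ⟨x, -, h3, h1⟩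
      refine ⟨x, Multiset.count_pos.mp (by omega), h3, fun y hy hyx => ?_⟩
      simpa [hyx] using h1 y ⟨hy, hyx⟩
  · intro k _ l _ hkl
    refine Finset.disjoint_filter.mpr fun p _ ⟨hk, _⟩ ⟨hl, hf⟩ => ?_
    have := Multiset.nodup_iff_count_le_one.mp hf k
    rw [Multiset.count_filter_of_pos (p := (· ≠ l)) hkl, hk] at this
    omega

theorem sum_card_distinctsExcept_one (n : ℕ) :
    ∑ k ∈ Icc 1 n, #(distinctsExcept n k 1) =
      ∑ k ∈ Icc 1 n, #(distinctsExcept n k 3) +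
        ∑ k ∈ Icc 1 n with ¬Even k, #(distincts (n - k)) := by
  have h := sum_congr rfl fun k hk =>
    card_distinctsExcept_one_add_eq_three_add (n := n) (k := k) (mem_Icc.mp hk).1 (mem_Icc.mp hk).2
  rw [sum_add_distrib, sum_add_distrib,
    sum_Icc_eq_sum_odd_add_sum_double (fun k => #(distincts (n - k)))] at h
  omega

end Nat.Partition

open scoped Classical in
theorem one_part_thrice_count_general (n : ℕ) :
    ((Finset.univ.filter fun p : n.Partition =>
        ∃ x ∈ p.parts, p.parts.count x = 3 ∧
          ∀ y ∈ p.parts, y ≠ x → p.parts.count y = 1).card : ℤ) =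
      (∑ p ∈ Nat.Partition.distincts n, (Multiset.card p.parts : ℤ)) -
        ∑ p ∈ Nat.Partition.odds n, (p.parts.toFinset.card : ℤ) := by
  rw [Nat.Partition.card_filter_exists_count_eq_three, ← Nat.cast_sum, ← Nat.cast_sum,
    Nat.Partition.sum_card_parts_distincts, Nat.Partition.sum_card_toFinset_parts_odds,
    Nat.Partition.sum_card_distinctsExcept_one]
  push_cast
  ring

open scoped Classical in
theorem one_part_thrice_count (n : ℕ) (hn : 0 < n) :
    ((Finset.univ.filter fun p : n.Partition =>
        ∃ x ∈ p.parts, p.parts.count x = 3 ∧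
          ∀ y ∈ p.parts, y ≠ x → p.parts.count y = 1).card : ℤ) =
      (∑ p ∈ Nat.Partition.distincts n, (Multiset.card p.parts : ℤ)) -
        ∑ p ∈ Nat.Partition.odds n, (p.parts.toFinset.card : ℤ) :=
  one_part_thrice_count_general n
end

section
/- For all positive integers n and k, the number of partitions of n having exactly k distinct even part values (each possibly repeated) equals the number of partitions of n having exactly k distinct part values that are repeated (appear with multiplicity at least 2). -/
/-!
If every finite set `T` is contained in `S a` for as many `a` as it is contained in `S' b` for
`b`, then `S` and `S'` have the same number of values of each size: the generating polynomials
`∑ₐ X ^ #(S a)` become equal after the substitution `X ↦ X + 1`, which expands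
`(X + 1) ^ #(S a)` over the subsets of `S a`.

Take `S p = {t | 2t is a part of p}` and `S' p` the set of repeated parts. For a finite set `T`
of positive integers, removing the parts `2t` (`t ∈ T`) from a partition and adding two parts
`t` for each `t ∈ T` is a bijection from partitions with `T ⊆ S p` onto partitions with
`T ⊆ S' p`.
-/

open Finset Polynomial

section SubsetStatistics

variable {α ι : Type*} [Fintype α]

lemma coeff_sum_X_pow_card (S : α → Finset ι) (k : ℕ) :
    (∑ a, (X : ℤ[X]) ^ #(S a)).coeff k = #{a | #(S a) = k} := by
  simp only [finsetSum_coeff, coeff_X_pow, card_filter, Nat.cast_sum, Nat.cast_ite, Nat.cast_one,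
    Nat.cast_zero, eq_comm]

variable [DecidableEq ι]

lemma taylor_one_sum_X_pow_card (S : α → Finset ι) {U : Finset ι} (hU : ∀ a, S a ⊆ U) :
    taylor 1 (∑ a, (X : ℤ[X]) ^ #(S a)) = ∑ T ∈ U.powerset, #{a | T ⊆ S a} • X ^ #T := by
  have hexpand : ∀ a, taylor 1 ((X : ℤ[X]) ^ #(S a)) = ∑ T ∈ (S a).powerset, X ^ #T := by
    simp [← sum_pow_mul_eq_add_pow]
  simp only [map_sum, hexpand]
  rw [sum_comm' (s' := fun T => univ.filter (T ⊆ S ·)) (t' := U.powerset)]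
  · simp
  · intro a T
    simp only [mem_univ, mem_powerset, mem_filter, true_and]
    exact ⟨fun h => ⟨h, h.trans (hU a)⟩, fun h => h.1⟩

theorem card_filter_card_eq_of_card_filter_subset_eq {β : Type*} [Fintype β]
    (S : α → Finset ι) (S' : β → Finset ι)
    (h : ∀ T, #{a | T ⊆ S a} = #{b | T ⊆ S' b}) (k : ℕ) :
    #{a | #(S a) = k} = #{b | #(S' b) = k} := by
  suffices ∑ a, (X : ℤ[X]) ^ #(S a) = ∑ b, X ^ #(S' b) by
    simpa only [coeff_sum_X_pow_card, Nat.cast_inj] using congr_arg (coeff · k) this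
  set U := univ.biUnion S ∪ univ.biUnion S'
  apply taylor_injective (1 : ℤ)
  have hS : ∀ a, S a ⊆ U := fun a => (subset_biUnion_of_mem S (mem_univ a)).trans subset_union_left
  have hS' : ∀ b, S' b ⊆ U :=
    fun b => (subset_biUnion_of_mem S' (mem_univ b)).trans subset_union_right
  simp only [taylor_one_sum_X_pow_card S hS, taylor_one_sum_X_pow_card S' hS', h]

end SubsetStatistics

lemma Finset.nsmul_val_le_iff {α : Type*} [DecidableEq α] (T : Finset α) (s : Multiset α)
    (m : ℕ) : m • T.val ≤ s ↔ ∀ t ∈ T, m ≤ s.count t := by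
  rw [Multiset.le_iff_count]
  refine ⟨fun h t ht => by simpa [Multiset.count_eq_one_of_mem T.nodup ht] using h t,
    fun h t => ?_⟩
  by_cases ht : t ∈ T
  · simpa [Multiset.count_eq_one_of_mem T.nodup ht] using h t ht
  · simp [Multiset.count_eq_zero_of_notMem ht]

lemma Finset.val_map_le_iff {α β : Type*} (T : Finset α) (f : α ↪ β) (s : Multiset β) :
    (T.map f).val ≤ s ↔ ∀ t ∈ T, f t ∈ s := by
  rw [Multiset.le_iff_subset (T.map f).nodup]
  simp [Multiset.subset_iff]

namespace Nat.Partition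

variable {n : ℕ} {A B : Multiset ℕ}

def exchange (hB : 0 ∉ B) (hAB : A.sum = B.sum) (p : {p : n.Partition // A ≤ p.parts}) :
    {q : n.Partition // B ≤ q.parts} where
  val :=
    { parts := p.1.parts - A + B
      parts_pos := by
        intro i hi
        rcases Multiset.mem_add.mp hi with hi | hi
        · exact p.1.parts_pos (Multiset.mem_of_le (Multiset.sub_le_self _ _) hi)
        · exact Nat.pos_of_ne_zero (ne_of_mem_of_not_mem hi hB)
      parts_sum := by
        have := congr_arg Multiset.sum (tsub_add_cancel_of_le p.2)
        rw [Multiset.sum_add, p.1.parts_sum] at this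
        rw [Multiset.sum_add, ← hAB, this] }
  property := Multiset.le_add_left _ _

lemma exchange_exchange (hA : 0 ∉ A) (hB : 0 ∉ B) (hAB : A.sum = B.sum)
    (p : {p : n.Partition // A ≤ p.parts}) : exchange hA hAB.symm (exchange hB hAB p) = p := by
  ext1; ext1
  exact (congr_arg (· + A) (add_tsub_cancel_right _ _)).trans (tsub_add_cancel_of_le p.2)

def exchangeEquiv (hA : 0 ∉ A) (hB : 0 ∉ B) (hAB : A.sum = B.sum) :
    {p : n.Partition // A ≤ p.parts} ≃ {q : n.Partition // B ≤ q.parts} where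
  toFun := exchange hB hAB
  invFun := exchange hA hAB.symm
  left_inv := exchange_exchange hA hB hAB
  right_inv := exchange_exchange hB hA hAB.symm

lemma card_filter_le_parts_eq (hA : 0 ∉ A) (hB : 0 ∉ B) (hAB : A.sum = B.sum) :
    #{p : n.Partition | A ≤ p.parts} = #{p : n.Partition | B ≤ p.parts} := by
  simpa only [Fintype.card_subtype] using Fintype.card_congr (exchangeEquiv hA hB hAB)

lemma filter_le_parts_eq_empty (hA : 0 ∈ A) :
    ({p : n.Partition | A ≤ p.parts} : Finset _) = ∅ :=
  filter_eq_empty_iff.mpr fun p _ h => (p.parts_pos (Multiset.mem_of_le h hA)).ne rfl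

def halvedEvenParts (p : n.Partition) : Finset ℕ :=
  {i ∈ p.parts.toFinset | Even i}.image (· / 2)

def repeatedParts (p : n.Partition) : Finset ℕ :=
  {i ∈ p.parts.toFinset | 2 ≤ p.parts.count i}

lemma card_halvedEvenParts (p : n.Partition) :
    #p.halvedEvenParts = #{i ∈ p.parts.toFinset | Even i} :=
  Finset.card_image_of_injOn fun i hi j hj hij => by
    obtain ⟨-, hi⟩ := mem_filter.mp hi
    obtain ⟨-, hj⟩ := mem_filter.mp hj
    rw [← Nat.two_mul_div_two_of_even hi, ← Nat.two_mul_div_two_of_even hj, hij]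

lemma mem_halvedEvenParts {p : n.Partition} {t : ℕ} :
    t ∈ p.halvedEvenParts ↔ 2 * t ∈ p.parts := by
  simp only [halvedEvenParts, mem_image, mem_filter, Multiset.mem_toFinset]
  constructor
  · rintro ⟨i, ⟨hi, heven⟩, rfl⟩
    rwa [Nat.two_mul_div_two_of_even heven]
  · intro h
    exact ⟨2 * t, ⟨h, even_two_mul t⟩, by omega⟩

lemma subset_halvedEvenParts_iff {p : n.Partition} {T : Finset ℕ} :
    T ⊆ p.halvedEvenParts ↔
      (T.map ⟨(2 * ·), mul_right_injective₀ two_ne_zero⟩).val ≤ p.parts := by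
  rw [val_map_le_iff]
  simp [subset_iff, mem_halvedEvenParts]

lemma subset_repeatedParts_iff {p : n.Partition} {T : Finset ℕ} :
    T ⊆ p.repeatedParts ↔ 2 • T.val ≤ p.parts := by
  rw [nsmul_val_le_iff]
  simp only [repeatedParts, subset_iff, mem_filter, Multiset.mem_toFinset]
  exact forall₂_congr fun t _ => and_iff_right_of_imp fun h => Multiset.count_pos.mp (by omega)

lemma card_filter_subset_halvedEvenParts_eq (T : Finset ℕ) :
    #{p : n.Partition | T ⊆ p.halvedEvenParts} = #{p : n.Partition | T ⊆ p.repeatedParts} := by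
  simp only [subset_halvedEvenParts_iff, subset_repeatedParts_iff]
  by_cases h0 : 0 ∈ T
  · rw [filter_le_parts_eq_empty (by simpa using h0),
      filter_le_parts_eq_empty (Multiset.mem_nsmul.mpr ⟨two_ne_zero, h0⟩)]
  · refine card_filter_le_parts_eq (by simpa using h0) (by simpa [Multiset.mem_nsmul] using h0) ?_
    simp [Multiset.sum_nsmul, mul_sum]

end Nat.Partition

open scoped Classical in
theorem even_values_eq_repeated_values_general (n k : ℕ) :
    (Finset.univ.filter fun p : n.Partition =>
        (p.parts.toFinset.filter fun i => Even i).card = k).card =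
      (Finset.univ.filter fun p : n.Partition =>
        (p.parts.toFinset.filter fun i => 2 ≤ p.parts.count i).card = k).card := by
  have key := card_filter_card_eq_of_card_filter_subset_eq _ _
    (Nat.Partition.card_filter_subset_halvedEvenParts_eq (n := n)) k
  simp only [Nat.Partition.card_halvedEvenParts, Nat.Partition.repeatedParts] at key
  convert key using 2
  exact filter_congr_decidable _ _ _

open scoped Classical in
theorem even_values_eq_repeated_values (n k : ℕ) (hn : 0 < n) (hk : 0 < k) :
    (Finset.univ.filter fun p : n.Partition =>
        (p.parts.toFinset.filter fun i => Even i).card = k).card =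
      (Finset.univ.filter fun p : n.Partition =>
        (p.parts.toFinset.filter fun i => 2 ≤ p.parts.count i).card = k).card :=
  even_values_eq_repeated_values_general n k
end

section
/- For every integer d ≥ 2 and every positive integer n, the number of partitions of n in which no part is divisible by d equals the number of partitions of n in which no part appears d or more times. -/
open scoped Classical in
theorem glaisher_general (d n : ℕ) (hd : 2 ≤ d) :
    (Finset.univ.filter fun p : n.Partition =>
        ∀ i ∈ p.parts, ¬ d ∣ i).card =
      (Finset.univ.filter fun p : n.Partition =>
        ∀ i : ℕ, p.parts.count i < d).card := by
  have hd₀ : 0 < d := by omega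
  convert Nat.Partition.card_restricted_eq_card_countRestricted n hd₀ using 2
  · exact Finset.filter_congr_decidable ..
  · ext p
    simp only [Nat.Partition.countRestricted, Finset.mem_filter, Finset.mem_univ, true_and]
    refine ⟨fun h i _ => h i, fun h i => ?_⟩
    by_cases hi : i ∈ p.parts
    · exact h i hi
    · rwa [Multiset.count_eq_zero_of_notMem hi]

open scoped Classical in
theorem glaisher (d n : ℕ) (hd : 2 ≤ d) (hn : 0 < n) :
    (Finset.univ.filter fun p : n.Partition =>
        ∀ i ∈ p.parts, ¬ d ∣ i).card =
      (Finset.univ.filter fun p : n.Partition =>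
        ∀ i : ℕ, p.parts.count i < d).card :=
  glaisher_general d n hd
end

section
/- For all positive integers n, k and every integer p ≥ 2, the number of partitions of n having exactly k distinct part values divisible by 2^p equals the number of partitions of n having exactly k distinct part values appearing at least 2^p times. -/
/-!
Two ways of splitting a partition of `n`, for `N > 0`. Its parts divisible by `N` give the
multiset `t` of their quotients by `N`, and the other parts form a partition of `n - N * Σ t`
with no part divisible by `N`. Dividing every multiplicity `m_v` by `N` with remainder gives a
multiset `t` (with `v` occurring `m_v / N` times) and a partition of `n - N * Σ t` in which no
part occurs `N` or more times. So the fibres over a given `t` are counted by the two sides of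
Glaisher's theorem, hence `t` has the same distribution in both constructions. Its distinct
elements are in bijection with the distinct parts divisible by `N`, resp. the distinct parts
occurring at least `N` times.
-/

open Finset

theorem Finset.card_filter_eq_of_card_fiber_eq {α β γ : Type*} [Fintype α] [Fintype β]
    [DecidableEq γ] {f : α → γ} {g : β → γ} (h : ∀ c, #{a | f a = c} = #{b | g b = c})
    (P : γ → Prop) [DecidablePred P] :
    #{a | P (f a)} = #{b | P (g b)} := by
  let e : α ≃ β := Equiv.ofFiberEquiv (f := f) (g := g) fun c =>
    Fintype.equivOfCardEq (by simpa only [Fintype.card_subtype] using h c)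
  exact card_equiv e fun a => by simp only [mem_filter_univ, e, Equiv.ofFiberEquiv_map]

namespace Multiset

section CountDivMod

variable {α : Type*} [DecidableEq α]

noncomputable def countDiv (s : Multiset α) (N : ℕ) : Multiset α :=
  Finsupp.toMultiset (s.toFinsupp.mapRange (· / N) (Nat.zero_div N))

noncomputable def countMod (s : Multiset α) (N : ℕ) : Multiset α :=
  Finsupp.toMultiset (s.toFinsupp.mapRange (· % N) (Nat.zero_mod N))

@[simp]
lemma count_countDiv (s : Multiset α) (N : ℕ) (a : α) :
    (s.countDiv N).count a = s.count a / N := by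
  simp [countDiv]

@[simp]
lemma count_countMod (s : Multiset α) (N : ℕ) (a : α) :
    (s.countMod N).count a = s.count a % N := by
  simp [countMod]

lemma nsmul_countDiv_add_countMod (s : Multiset α) (N : ℕ) :
    N • s.countDiv N + s.countMod N = s := by
  ext a
  simp [Nat.div_add_mod]

lemma countMod_le (s : Multiset α) (N : ℕ) : s.countMod N ≤ s :=
  le_iff_count.2 fun a => by simpa using Nat.mod_le _ _

lemma countDiv_le (s : Multiset α) (N : ℕ) : s.countDiv N ≤ s :=
  le_iff_count.2 fun a => by simpa using Nat.div_le_self _ _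

lemma countDiv_nsmul_add {N : ℕ} {r : Multiset α} (hr : ∀ a, r.count a < N) (t : Multiset α) :
    (N • t + r).countDiv N = t := by
  ext a
  simp [Nat.mul_add_div (Nat.zero_lt_of_lt (hr a)), Nat.div_eq_of_lt (hr a)]

lemma countMod_nsmul_add {N : ℕ} {r : Multiset α} (hr : ∀ a, r.count a < N) (t : Multiset α) :
    (N • t + r).countMod N = r := by
  ext a
  simp [Nat.mod_eq_of_lt (hr a)]

lemma toFinset_countDiv {N : ℕ} (hN : 0 < N) (s : Multiset α) :
    (s.countDiv N).toFinset = s.toFinset.filter (N ≤ s.count ·) := by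
  ext a
  simp only [mem_toFinset, Finset.mem_filter, ← count_pos, count_countDiv, Nat.div_pos_iff, hN,
    true_and]
  omega

lemma mul_sum_countDiv_le (s : Multiset ℕ) (N : ℕ) : N * (s.countDiv N).sum ≤ s.sum := by
  conv_rhs => rw [← nsmul_countDiv_add_countMod s N]
  simp [sum_nsmul]

end CountDivMod

def quotDvd (s : Multiset ℕ) (N : ℕ) : Multiset ℕ :=
  (s.filter (N ∣ ·)).map (· / N)

lemma map_mul_quotDvd_add_filter_not_dvd (N : ℕ) (s : Multiset ℕ) :
    (s.quotDvd N).map (N * ·) + s.filter (¬ N ∣ ·) = s := by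
  rw [quotDvd, map_map]
  conv_rhs => rw [← filter_add_not (N ∣ ·) s]
  congr 1
  exact (map_congr rfl fun a ha => Nat.mul_div_cancel' (of_mem_filter ha)).trans (map_id' _)

lemma mul_sum_quotDvd_le (N : ℕ) (s : Multiset ℕ) :
    N * (s.quotDvd N).sum ≤ s.sum := by
  conv_rhs => rw [← map_mul_quotDvd_add_filter_not_dvd N s]
  rw [sum_add, sum_map_mul_left, map_id']
  exact Nat.le_add_right _ _

lemma quotDvd_map_mul_add {N : ℕ} (hN : 0 < N) {r : Multiset ℕ} (hr : ∀ a ∈ r, ¬ N ∣ a)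
    (t : Multiset ℕ) : (t.map (N * ·) + r).quotDvd N = t := by
  rw [quotDvd, filter_add, filter_eq_self.mpr (by simp), filter_eq_nil.mpr hr, add_zero, map_map]
  simp [hN]

lemma filter_not_dvd_map_mul_add {N : ℕ} {r : Multiset ℕ} (hr : ∀ a ∈ r, ¬ N ∣ a)
    (t : Multiset ℕ) : (t.map (N * ·) + r).filter (¬ N ∣ ·) = r := by
  rw [filter_add, filter_eq_nil.mpr (by simp), filter_eq_self.mpr hr, zero_add]

lemma card_toFinset_quotDvd (N : ℕ) (s : Multiset ℕ) :
    (s.quotDvd N).toFinset.card = (s.toFinset.filter (N ∣ ·)).card := by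
  rw [quotDvd, toFinset_map, toFinset_filter]
  refine card_image_of_injOn fun a ha b hb hab => ?_
  simp only [coe_filter, Set.mem_ofPred_eq] at ha hb
  rw [← Nat.mul_div_cancel' ha.2, ← Nat.mul_div_cancel' hb.2]
  exact congrArg (N * ·) hab

end Multiset

namespace Nat.Partition

variable {N : ℕ}

lemma card_quotDvd_fiber_eq_card_restricted (hN : 0 < N) {t : Multiset ℕ}
    (ht : ∀ i ∈ t, 0 < i) (m : ℕ) :
    #{q : (m + N * t.sum).Partition | q.parts.quotDvd N = t} =
      #(restricted m (¬ N ∣ ·)) := by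
  have hsum {s r : Multiset ℕ} (h : t.map (N * ·) + r = s) : s.sum = N * t.sum + r.sum := by
    rw [← h, Multiset.sum_add, Multiset.sum_map_mul_left, Multiset.map_id']
  have hsplit {q : (m + N * t.sum).Partition}
      (hq : q ∈ ({q | q.parts.quotDvd N = t} : Finset _)) :
      t.map (N * ·) + q.parts.filter (¬ N ∣ ·) = q.parts := by
    have := Multiset.map_mul_quotDvd_add_filter_not_dvd N q.parts
    rwa [(mem_filter_univ q).1 hq] at this
  have hrestr {r : m.Partition} (hr : r ∈ restricted m (¬ N ∣ ·)) : ∀ i ∈ r.parts, ¬ N ∣ i :=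
    (mem_filter_univ _).1 hr
  refine card_bij'
    (fun q hq => ⟨q.parts.filter (¬ N ∣ ·), fun hi => q.parts_pos (Multiset.mem_of_mem_filter hi),
      by have := hsum (hsplit hq); rw [q.parts_sum] at this; omega⟩)
    (fun r _ => ⟨t.map (N * ·) + r.parts, fun hi => ?_, by rw [hsum rfl, r.parts_sum, add_comm]⟩)
    (fun q _ => (mem_filter_univ _).2 fun i hi => (Multiset.mem_filter.1 hi).2)
    (fun r hr => (mem_filter_univ _).2 ?_)
    (fun q hq => Nat.Partition.ext (hsplit hq))
    (fun r hr => Nat.Partition.ext (Multiset.filter_not_dvd_map_mul_add (hrestr hr) t))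
  · obtain hi | hi := Multiset.mem_add.1 hi
    · obtain ⟨j, hj, rfl⟩ := Multiset.mem_map.1 hi
      exact Nat.mul_pos hN (ht j hj)
    · exact r.parts_pos hi
  · exact Multiset.quotDvd_map_mul_add hN (hrestr hr) t

lemma card_countDiv_fiber_eq_card_countRestricted (hN : 0 < N) {t : Multiset ℕ}
    (ht : ∀ i ∈ t, 0 < i) (m : ℕ) :
    #{q : (m + N * t.sum).Partition | q.parts.countDiv N = t} = #(countRestricted m N) := by
  have hsum {s r : Multiset ℕ} (h : N • t + r = s) : s.sum = N * t.sum + r.sum := by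
    rw [← h, Multiset.sum_add, Multiset.sum_nsmul, smul_eq_mul]
  have hsplit {q : (m + N * t.sum).Partition}
      (hq : q ∈ ({q | q.parts.countDiv N = t} : Finset _)) :
      N • t + q.parts.countMod N = q.parts := by
    have := Multiset.nsmul_countDiv_add_countMod q.parts N
    rwa [(mem_filter_univ q).1 hq] at this
  have hcount {r : m.Partition} (hr : r ∈ countRestricted m N) (i : ℕ) : r.parts.count i < N := by
    by_cases hi : i ∈ r.parts
    · exact (mem_filter_univ r).1 hr i hi
    · rwa [Multiset.count_eq_zero_of_notMem hi]
  refine card_bij'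
    (fun q hq => ⟨q.parts.countMod N,
      fun hi => q.parts_pos (Multiset.mem_of_le (q.parts.countMod_le N) hi),
      by have := hsum (hsplit hq); rw [q.parts_sum] at this; omega⟩)
    (fun r _ => ⟨N • t + r.parts, fun hi => ?_, by rw [hsum rfl, r.parts_sum, add_comm]⟩)
    (fun q _ => (mem_filter_univ _).2 fun i _ => by simpa using Nat.mod_lt _ hN)
    (fun r hr => (mem_filter_univ _).2 (Multiset.countDiv_nsmul_add (hcount hr) t))
    (fun q hq => Nat.Partition.ext (hsplit hq))
    (fun r hr => Nat.Partition.ext (Multiset.countMod_nsmul_add (hcount hr) t))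
  obtain hi | hi := Multiset.mem_add.1 hi
  · exact ht _ (Multiset.mem_of_mem_nsmul hi)
  · exact r.parts_pos hi

lemma card_quotDvd_fiber_eq_card_countDiv_fiber (hN : 0 < N) (n : ℕ)
    (t : Multiset ℕ) :
    #{q : n.Partition | q.parts.quotDvd N = t} =
      #{q : n.Partition | q.parts.countDiv N = t} := by
  by_cases ht : (∀ i ∈ t, 0 < i) ∧ N * t.sum ≤ n
  · obtain ⟨htpos, hle⟩ := ht
    obtain ⟨m, rfl⟩ := Nat.exists_eq_add_of_le' hle
    rw [card_quotDvd_fiber_eq_card_restricted hN htpos,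
      card_countDiv_fiber_eq_card_countRestricted hN htpos,
      card_restricted_eq_card_countRestricted m hN]
  · have hdvd : ∀ q : n.Partition, q.parts.quotDvd N ≠ t := by
      rintro q rfl
      refine ht ⟨fun i hi => ?_,
        (Multiset.mul_sum_quotDvd_le N q.parts).trans q.parts_sum.le⟩
      obtain ⟨j, hj, rfl⟩ := Multiset.mem_map.1 hi
      obtain ⟨hjq, hNj⟩ := Multiset.mem_filter.1 hj
      exact Nat.div_pos (Nat.le_of_dvd (q.parts_pos hjq) hNj) hN
    have hcountDiv : ∀ q : n.Partition, q.parts.countDiv N ≠ t := by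
      rintro q rfl
      exact ht ⟨fun i hi => q.parts_pos (Multiset.mem_of_le (q.parts.countDiv_le N) hi),
        (Multiset.mul_sum_countDiv_le q.parts N).trans q.parts_sum.le⟩
    simp [hdvd, hcountDiv]

theorem card_filter_quotDvd_eq_card_filter_countDiv (hN : 0 < N) (n : ℕ)
    (P : Multiset ℕ → Prop) [DecidablePred P] :
    #{q : n.Partition | P (q.parts.quotDvd N)} = #{q : n.Partition | P (q.parts.countDiv N)} :=
  Finset.card_filter_eq_of_card_fiber_eq (card_quotDvd_fiber_eq_card_countDiv_fiber hN n) P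

theorem card_filter_card_dvd_eq_card_filter_card_le_count (n N k : ℕ) (hN : 0 < N) :
    #{q : n.Partition | #{i ∈ q.parts.toFinset | N ∣ i} = k} =
      #{q : n.Partition | #{i ∈ q.parts.toFinset | N ≤ q.parts.count i} = k} := by
  simp_rw [← Multiset.card_toFinset_quotDvd, ← Multiset.toFinset_countDiv hN]
  exact card_filter_quotDvd_eq_card_filter_countDiv hN n (fun t => t.toFinset.card = k)

end Nat.Partition

open scoped Classical in
theorem pow_two_values_eq_high_multiplicity_values_general (n k p : ℕ) :
    (Finset.univ.filter fun q : n.Partition =>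
        (q.parts.toFinset.filter fun i => 2 ^ p ∣ i).card = k).card =
      (Finset.univ.filter fun q : n.Partition =>
        (q.parts.toFinset.filter fun i => 2 ^ p ≤ q.parts.count i).card = k).card := by
  convert Nat.Partition.card_filter_card_dvd_eq_card_filter_card_le_count n (2 ^ p) k
    (Nat.two_pow_pos p)

open scoped Classical in
theorem pow_two_values_eq_high_multiplicity_values (n k p : ℕ)
    (hn : 0 < n) (hk : 0 < k) (hp : 2 ≤ p) :
    (Finset.univ.filter fun q : n.Partition =>
        (q.parts.toFinset.filter fun i => 2 ^ p ∣ i).card = k).card =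
      (Finset.univ.filter fun q : n.Partition =>
        (q.parts.toFinset.filter fun i => 2 ^ p ≤ q.parts.count i).card = k).card :=
  pow_two_values_eq_high_multiplicity_values_general n k p
end

section
/- For every positive integer n, the total number of parts counted over all partitions of n into odd parts is greater than or equal to the total number of parts counted over all partitions of n into distinct parts. -/
/-!
Glaisher's map splits each part `2 ^ k * o` (with `o` odd) into `2 ^ k` parts equal to `o`.
It sends partitions into distinct parts to partitions into odd parts without decreasing the
number of parts, and it is injective on distinct partitions: the multiplicity of `o` in the
image is `∑ 2 ^ k` over the parts `2 ^ k * o` of the original partition, and a natural number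
has only one binary expansion.
-/

open Multiset

namespace Nat

theorem eq_of_factorization_two_eq_of_ordCompl_eq {a b : ℕ}
    (hv : a.factorization 2 = b.factorization 2) (ho : ordCompl[2] a = ordCompl[2] b) : a = b := by
  rw [← ordProj_mul_ordCompl_eq_self a 2, ← ordProj_mul_ordCompl_eq_self b 2, ho, hv]

def splitOdd (a : ℕ) : Multiset ℕ :=
  replicate (ordProj[2] a) (ordCompl[2] a)

theorem sum_splitOdd (a : ℕ) : (splitOdd a).sum = a := by
  rw [splitOdd, sum_replicate, smul_eq_mul, ordProj_mul_ordCompl_eq_self]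

theorem one_le_card_splitOdd (a : ℕ) : 1 ≤ Multiset.card (splitOdd a) := by
  rw [splitOdd, card_replicate]
  exact Nat.one_le_two_pow

theorem not_even_of_mem_splitOdd {a o : ℕ} (ha : a ≠ 0) (ho : o ∈ splitOdd a) : ¬Even o := by
  rw [eq_of_mem_replicate ho]
  exact fun h ↦ not_dvd_ordCompl prime_two ha h.two_dvd

theorem pos_of_mem_splitOdd {a o : ℕ} (ha : a ≠ 0) (ho : o ∈ splitOdd a) : 0 < o := by
  rw [eq_of_mem_replicate ho]
  exact ordCompl_pos 2 ha

theorem count_splitOdd (a o : ℕ) :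
    Multiset.count o (splitOdd a) = if ordCompl[2] a = o then 2 ^ a.factorization 2 else 0 :=
  count_replicate ..

/-- The exponents `k` such that `2 ^ k * o ∈ s` (for `o` odd). -/
def twoPowExponents (s : Finset ℕ) (o : ℕ) : Finset ℕ :=
  {a ∈ s | ordCompl[2] a = o}.image (·.factorization 2)

theorem mem_iff_factorization_mem_twoPowExponents {s : Finset ℕ} {a : ℕ} :
    a ∈ s ↔ a.factorization 2 ∈ twoPowExponents s (ordCompl[2] a) := by
  simp only [twoPowExponents, Finset.mem_image, Finset.mem_filter]
  constructor
  · exact fun ha ↦ ⟨a, ⟨ha, rfl⟩, rfl⟩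
  · rintro ⟨b, ⟨hb, ho⟩, hv⟩
    rwa [← eq_of_factorization_two_eq_of_ordCompl_eq hv ho]

theorem count_bind_splitOdd (s : Finset ℕ) (o : ℕ) :
    Multiset.count o (s.val.bind splitOdd) = ∑ k ∈ twoPowExponents s o, 2 ^ k := by
  rw [twoPowExponents, Finset.sum_image, Finset.sum_filter, count_bind]
  · simp only [count_splitOdd]
    rfl
  · intro a ha b hb hv
    simp only [Finset.coe_filter, Set.mem_ofPred_eq] at ha hb
    exact eq_of_factorization_two_eq_of_ordCompl_eq hv (ha.2.trans hb.2.symm)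

theorem injective_bind_splitOdd :
    Function.Injective fun s : Finset ℕ ↦ s.val.bind splitOdd := by
  intro s t h
  have hexp (o : ℕ) : twoPowExponents s o = twoPowExponents t o :=
    Finset.geomSum_injective le_rfl <| by
      simp only [← count_bind_splitOdd, h]
  ext a
  rw [mem_iff_factorization_mem_twoPowExponents (s := s),
    mem_iff_factorization_mem_twoPowExponents (s := t), hexp]

namespace Partition

def toOdds {n : ℕ} (p : n.Partition) : n.Partition where
  parts := p.parts.bind splitOdd
  parts_pos hi := by
    obtain ⟨a, ha, hi⟩ := mem_bind.mp hi
    exact pos_of_mem_splitOdd (p.parts_pos ha).ne' hi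
  parts_sum := by
    rw [sum_bind, map_congr rfl fun a _ ↦ sum_splitOdd a, map_id', p.parts_sum]

theorem toOdds_mem_odds {n : ℕ} (p : n.Partition) : p.toOdds ∈ odds n := by
  simp only [odds, restricted, Finset.mem_filter, Finset.mem_univ, true_and]
  intro o ho
  obtain ⟨a, ha, ho⟩ := mem_bind.mp ho
  exact not_even_of_mem_splitOdd (p.parts_pos ha).ne' ho

theorem card_parts_le_card_toOdds_parts {n : ℕ} (p : n.Partition) :
    Multiset.card p.parts ≤ Multiset.card p.toOdds.parts := by
  rw [toOdds, card_bind]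
  simpa using card_nsmul_le_sum (s := p.parts.map (Multiset.card ∘ splitOdd)) (a := 1)
    (by simpa using fun a _ ↦ one_le_card_splitOdd a)

theorem injOn_toOdds_distincts (n : ℕ) : Set.InjOn toOdds (distincts n : Set n.Partition) := by
  intro p hp q hq h
  simp only [distincts, Finset.coe_filter, Finset.mem_univ, true_and, Set.mem_ofPred_eq] at hp hq
  ext1
  exact congrArg Finset.val <|
    injective_bind_splitOdd (a₁ := ⟨p.parts, hp⟩) (a₂ := ⟨q.parts, hq⟩) (congrArg parts h)

end Partition

end Nat

theorem odds_parts_ge_distincts_parts_general (n : ℕ) :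
    ∑ p ∈ Nat.Partition.distincts n, Multiset.card p.parts ≤
      ∑ p ∈ Nat.Partition.odds n, Multiset.card p.parts := by
  open Nat.Partition in
  calc ∑ p ∈ distincts n, Multiset.card p.parts
      ≤ ∑ p ∈ distincts n, Multiset.card p.toOdds.parts :=
        Finset.sum_le_sum fun p _ ↦ card_parts_le_card_toOdds_parts p
    _ = ∑ q ∈ (distincts n).image toOdds, Multiset.card q.parts := by
        rw [Finset.sum_image (injOn_toOdds_distincts n)]
    _ ≤ ∑ q ∈ odds n, Multiset.card q.parts :=
        Finset.sum_le_sum_of_subset <| Finset.image_subset_iff.mpr fun p _ ↦ toOdds_mem_odds p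

theorem odds_parts_ge_distincts_parts (n : ℕ) (hn : 0 < n) :
    ∑ p ∈ Nat.Partition.distincts n, Multiset.card p.parts ≤
      ∑ p ∈ Nat.Partition.odds n, Multiset.card p.parts :=
  odds_parts_ge_distincts_parts_general n
end

section
/- For every positive integer n, the total number of parts counted over all partitions of n into distinct parts is greater than or equal to the total number of distinct part values counted over all partitions of n into odd parts. -/
/-!
Glaisher's bijection sends a partition into odd parts, in which the odd value `a` occurs
`m = 2 ^ i₁ + ⋯ + 2 ^ iₖ` times (binary expansion), to the partition into the distinct parts
`2 ^ i₁ * a, …, 2 ^ iₖ * a`. Distinctness and injectivity come from the uniqueness of the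
factorisation `2 ^ i * a` with `a` odd. Each distinct value `a` of the odd partition yields
`k ≥ 1` parts of its image, so the map only increases the weight being summed.
-/

open Finset

theorem Nat.factorization_two_pow_mul_of_odd {a : ℕ} (ha : Odd a) (i : ℕ) :
    (2 ^ i * a).factorization 2 = i := by
  rw [Nat.factorization_mul (by positivity) ha.pos.ne', Finsupp.add_apply,
    Nat.prime_two.factorization_pow, Finsupp.single_eq_same,
    Nat.factorization_eq_zero_of_not_dvd ha.not_two_dvd_nat, add_zero]

theorem Nat.two_pow_mul_odd_injOn :
    Set.InjOn (fun x : (_ : ℕ) × ℕ => 2 ^ x.2 * x.1) {x | Odd x.1} := by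
  rintro ⟨a, i⟩ ha ⟨b, j⟩ hb h
  have hij : i = j := by
    simpa only [Nat.factorization_two_pow_mul_of_odd ha, Nat.factorization_two_pow_mul_of_odd hb]
      using congrArg (·.factorization 2) h
  subst hij
  obtain rfl : a = b := Nat.eq_of_mul_eq_mul_left (by positivity) h
  rfl

namespace Multiset

def binaryDigitsOfCount (s : Multiset ℕ) : Finset ((_ : ℕ) × ℕ) :=
  s.toFinset.sigma fun a => (s.count a).bitIndices.toFinset

theorem mem_binaryDigitsOfCount {s : Multiset ℕ} {x : (_ : ℕ) × ℕ} :
    x ∈ binaryDigitsOfCount s ↔ x.2 ∈ (s.count x.1).bitIndices := by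
  rw [binaryDigitsOfCount, Finset.mem_sigma, mem_toFinset, List.mem_toFinset,
    and_iff_right_of_imp fun hx => count_pos.1 ((Nat.two_pow_pos _).trans_le
      (Nat.two_pow_le_of_mem_bitIndices hx))]

theorem fst_mem_of_mem_binaryDigitsOfCount {s : Multiset ℕ} {x : (_ : ℕ) × ℕ}
    (hx : x ∈ binaryDigitsOfCount s) : x.1 ∈ s :=
  mem_toFinset.1 (Finset.mem_sigma.1 hx).1

theorem binaryDigitsOfCount_injective : Function.Injective binaryDigitsOfCount := by
  intro s t h
  ext a
  apply Finset.equivBitIndices.injective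
  ext i
  simp only [Finset.equivBitIndices_apply, List.mem_toFinset]
  rw [← mem_binaryDigitsOfCount (x := ⟨a, i⟩), h, mem_binaryDigitsOfCount]

def glaisher (s : Multiset ℕ) : Multiset ℕ :=
  (binaryDigitsOfCount s).val.map fun x => 2 ^ x.2 * x.1

theorem sum_glaisher (s : Multiset ℕ) : (glaisher s).sum = s.sum := by
  rw [glaisher, ← Finset.sum_eq_multiset_sum, binaryDigitsOfCount, Finset.sum_sigma,
    Finset.sum_multiset_count s]
  refine Finset.sum_congr rfl fun a _ => ?_
  rw [← Finset.sum_mul, Finset.sum_toFinset_bitIndices_two_pow, smul_eq_mul]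

theorem card_toFinset_le_card_glaisher (s : Multiset ℕ) :
    s.toFinset.card ≤ card (glaisher s) := by
  rw [glaisher, card_map, ← Finset.card_def, binaryDigitsOfCount, Finset.card_sigma,
    Finset.card_eq_sum_ones]
  refine Finset.sum_le_sum fun a ha => Finset.one_le_card.2 ?_
  by_contra h
  rw [Finset.not_nonempty_iff_eq_empty] at h
  refine (count_pos.2 (mem_toFinset.1 ha)).ne' ?_
  simpa [h] using (Finset.sum_toFinset_bitIndices_two_pow (s.count a)).symm

theorem nodup_glaisher {s : Multiset ℕ} (hs : ∀ a ∈ s, Odd a) : (glaisher s).Nodup :=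
  Nodup.map_on (fun _ hx _ hy => Nat.two_pow_mul_odd_injOn
    (hs _ (fst_mem_of_mem_binaryDigitsOfCount hx)) (hs _ (fst_mem_of_mem_binaryDigitsOfCount hy)))
    (Finset.nodup _)

theorem mem_binaryDigitsOfCount_iff_mem_glaisher {s : Multiset ℕ} (hs : ∀ a ∈ s, Odd a)
    {x : (_ : ℕ) × ℕ} (hx : Odd x.1) :
    x ∈ binaryDigitsOfCount s ↔ 2 ^ x.2 * x.1 ∈ glaisher s := by
  refine ⟨fun h => mem_map_of_mem _ h, fun h => ?_⟩
  obtain ⟨y, hy, hyx⟩ := mem_map.1 h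
  rwa [← Nat.two_pow_mul_odd_injOn (hs _ (fst_mem_of_mem_binaryDigitsOfCount hy)) hx hyx]

theorem glaisher_injOn : Set.InjOn glaisher {s | ∀ a ∈ s, Odd a} := by
  intro s hs t ht h
  apply binaryDigitsOfCount_injective
  ext x
  by_cases hx : Odd x.1
  · rw [mem_binaryDigitsOfCount_iff_mem_glaisher hs hx,
      mem_binaryDigitsOfCount_iff_mem_glaisher ht hx, h]
  · exact iff_of_false (fun h => hx (hs _ (fst_mem_of_mem_binaryDigitsOfCount h)))
      (fun h => hx (ht _ (fst_mem_of_mem_binaryDigitsOfCount h)))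

end Multiset

namespace Nat.Partition

variable {n : ℕ}

theorem mem_odds_iff {p : n.Partition} : p ∈ odds n ↔ ∀ a ∈ p.parts, Odd a := by
  simp only [odds, restricted, Finset.mem_filter, Finset.mem_univ, true_and,
    Nat.not_even_iff_odd]

def glaisher (p : n.Partition) : n.Partition where
  parts := p.parts.glaisher
  parts_pos hb := by
    obtain ⟨x, hx, rfl⟩ := Multiset.mem_map.1 hb
    have := p.parts_pos (Multiset.fst_mem_of_mem_binaryDigitsOfCount hx)
    positivity
  parts_sum := by rw [Multiset.sum_glaisher, p.parts_sum]

theorem glaisher_mem_distincts {p : n.Partition} (hp : p ∈ odds n) : p.glaisher ∈ distincts n :=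
  Finset.mem_filter.2 ⟨Finset.mem_univ _, Multiset.nodup_glaisher (mem_odds_iff.1 hp)⟩

theorem glaisher_injOn : Set.InjOn glaisher (odds n : Set n.Partition) :=
  fun _ hp _ hq h => Nat.Partition.ext <|
    Multiset.glaisher_injOn (mem_odds_iff.1 hp) (mem_odds_iff.1 hq) (congrArg parts h)

end Nat.Partition

open Nat.Partition in
theorem distincts_parts_ge_odds_distinct_values_general (n : ℕ) :
    ∑ p ∈ Nat.Partition.odds n, p.parts.toFinset.card ≤
      ∑ p ∈ Nat.Partition.distincts n, Multiset.card p.parts := by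
  calc ∑ p ∈ odds n, p.parts.toFinset.card
      ≤ ∑ p ∈ odds n, Multiset.card p.glaisher.parts :=
        sum_le_sum fun p _ => Multiset.card_toFinset_le_card_glaisher p.parts
    _ = ∑ q ∈ (odds n).image glaisher, Multiset.card q.parts := by
        rw [sum_image glaisher_injOn]
    _ ≤ ∑ q ∈ distincts n, Multiset.card q.parts :=
        sum_le_sum_of_subset (image_subset_iff.2 fun _ => glaisher_mem_distincts)

theorem distincts_parts_ge_odds_distinct_values (n : ℕ) (hn : 0 < n) :
    ∑ p ∈ Nat.Partition.odds n, p.parts.toFinset.card ≤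
      ∑ p ∈ Nat.Partition.distincts n, Multiset.card p.parts :=
  distincts_parts_ge_odds_distinct_values_general n
end

section
/- For all integers d ≥ 2, positive integers n and k, the number of partitions of n having exactly k distinct part values divisible by d equals the number of partitions of n having exactly k distinct part values with multiplicity at least d. -/
/-!
Fix `j`. Given a partition with at least `j` part values divisible by `d`, choose `j` of them,
say `d * t` for `t ∈ T`, and split each chosen part `d * t` into `d` parts `t`. This is a
bijection onto the pairs of a partition and a `j`-set `T` of values of multiplicity at least `d`;
the inverse merges `d` copies of each `t ∈ T` into one part `d * t`. Hence, writing `a p` and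
`b p` for the two statistics, `∑ₚ (a p).choose j = ∑ₚ (b p).choose j` for every `j`. These are the
coefficients of `∑ₚ (X + 1) ^ a p` and `∑ₚ (X + 1) ^ b p`, so substituting `X - 1` for `X` gives
`∑ₚ X ^ a p = ∑ₚ X ^ b p`: the two statistics have the same distribution.
-/

open Finset Polynomial

theorem Finset.card_filter_eq_of_sum_choose_eq {ι κ : Type*} (s : Finset ι) (t : Finset κ)
    (a : ι → ℕ) (b : κ → ℕ) (h : ∀ j, ∑ i ∈ s, (a i).choose j = ∑ i ∈ t, (b i).choose j)
    (k : ℕ) : #{i ∈ s | a i = k} = #{i ∈ t | b i = k} := by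
  have hgen : ∑ i ∈ s, (X : ℤ[X]) ^ a i = ∑ i ∈ t, X ^ b i := by
    refine taylor_injective (1 : ℤ) (Polynomial.ext fun j => ?_)
    simp only [map_sum, taylor_pow, taylor_X, map_one, finsetSum_coeff, coeff_X_add_one_pow]
    exact_mod_cast h j
  have hk := congrArg (coeff · k) hgen
  simp only [finsetSum_coeff, coeff_X_pow] at hk
  simp only [card_filter, eq_comm (b := k)]
  exact_mod_cast hk

namespace Multiset

variable {α : Type*} [DecidableEq α]

theorem sum_tsub_add_of_sum_eq [AddCommMonoid α] {m s t : Multiset α} (hs : s ≤ m)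
    (hst : s.sum = t.sum) : (m - s + t).sum = m.sum := by
  rw [sum_add, ← hst, ← sum_add, tsub_add_cancel_of_le hs]

theorem sum_map_mul_left_eq_sum_nsmul (s : Multiset ℕ) (d : ℕ) :
    (s.map (d * ·)).sum = (d • s).sum := by
  rw [sum_map_mul_left, map_id', sum_nsmul, smul_eq_mul]

theorem nsmul_val_le_iff {d : ℕ} {T : Finset α} {m : Multiset α} :
    d • T.val ≤ m ↔ ∀ a ∈ T, d ≤ m.count a := by
  simp only [le_iff_count, count_nsmul, count_eq_of_nodup T.nodup]
  refine ⟨fun h a ha => by simpa [ha] using h a, fun h a => ?_⟩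
  split_ifs with ha
  · simpa using h a ha
  · simp

theorem nsmul_val_le_iff_subset {d : ℕ} (hd : d ≠ 0) {T : Finset α} {m : Multiset α} :
    d • T.val ≤ m ↔ T ⊆ {a ∈ m.toFinset | d ≤ m.count a} := by
  rw [nsmul_val_le_iff]
  refine forall₂_congr fun a _ => ?_
  simp only [Finset.mem_filter, mem_toFinset, iff_and_self]
  exact fun h => count_pos.1 (by omega)

end Multiset

namespace Nat.Partition

variable {n d : ℕ}

def split (p : n.Partition) (T : Finset ℕ) (hT : T.val.map (d * ·) ≤ p.parts) : n.Partition where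
  parts := p.parts - T.val.map (d * ·) + d • T.val
  parts_pos {i} hi := by
    rcases Multiset.mem_add.1 hi with hi | hi
    · exact p.parts_pos (Multiset.mem_of_le tsub_le_self hi)
    · have hdi : d * i ∈ p.parts :=
        Multiset.mem_of_le hT (Multiset.mem_map_of_mem _ (Multiset.mem_of_mem_nsmul hi))
      exact Nat.pos_of_mul_pos_left (p.parts_pos hdi)
  parts_sum := by
    rw [Multiset.sum_tsub_add_of_sum_eq hT (Multiset.sum_map_mul_left_eq_sum_nsmul _ d),
      p.parts_sum]

def merge (hd : 0 < d) (p : n.Partition) (T : Finset ℕ) (hT : d • T.val ≤ p.parts) :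
    n.Partition where
  parts := p.parts - d • T.val + T.val.map (d * ·)
  parts_pos {i} hi := by
    rcases Multiset.mem_add.1 hi with hi | hi
    · exact p.parts_pos (Multiset.mem_of_le tsub_le_self hi)
    · obtain ⟨t, ht, rfl⟩ := Multiset.mem_map.1 hi
      have ht' : t ∈ p.parts :=
        Multiset.mem_of_le hT ((Multiset.mem_nsmul_of_ne_zero hd.ne').2 ht)
      exact Nat.mul_pos hd (p.parts_pos ht')
  parts_sum := by
    rw [Multiset.sum_tsub_add_of_sum_eq hT (Multiset.sum_map_mul_left_eq_sum_nsmul _ d).symm,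
      p.parts_sum]

theorem merge_split (hd : 0 < d) (p : n.Partition) (T : Finset ℕ)
    (hT : T.val.map (d * ·) ≤ p.parts) :
    (p.split T hT).merge hd T (Multiset.le_add_left _ _) = p :=
  Nat.Partition.ext <| by simp only [merge, split, add_tsub_cancel_right, tsub_add_cancel_of_le hT]

theorem split_merge (hd : 0 < d) (p : n.Partition) (T : Finset ℕ)
    (hT : d • T.val ≤ p.parts) :
    (p.merge hd T hT).split T (Multiset.le_add_left _ _) = p :=
  Nat.Partition.ext <| by simp only [merge, split, add_tsub_cancel_right, tsub_add_cancel_of_le hT]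

def dvdQuotients (d : ℕ) (p : n.Partition) : Finset ℕ :=
  {i ∈ p.parts.toFinset | d ∣ i}.image (· / d)

theorem mem_dvdQuotients (hd : 0 < d) {p : n.Partition} {t : ℕ} :
    t ∈ dvdQuotients d p ↔ d * t ∈ p.parts := by
  simp only [dvdQuotients, mem_image, mem_filter, Multiset.mem_toFinset]
  constructor
  · rintro ⟨_, ⟨hi, s, rfl⟩, rfl⟩
    rwa [Nat.mul_div_cancel_left s hd]
  · exact fun h => ⟨d * t, ⟨h, dvd_mul_right d t⟩, Nat.mul_div_cancel_left t hd⟩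

theorem card_dvdQuotients (p : n.Partition) :
    #(dvdQuotients d p) = #{i ∈ p.parts.toFinset | d ∣ i} := by
  refine Finset.card_image_of_injOn fun a ha b hb hab => ?_
  simp only [mem_coe, mem_filter] at ha hb
  rw [← Nat.mul_div_cancel' ha.2, ← Nat.mul_div_cancel' hb.2]
  exact congrArg (d * ·) hab

theorem map_mul_le_iff_subset_dvdQuotients (hd : 0 < d) {p : n.Partition} {T : Finset ℕ} :
    T.val.map (d * ·) ≤ p.parts ↔ T ⊆ dvdQuotients d p := by
  rw [Multiset.le_iff_subset (T.nodup.map (mul_right_injective₀ hd.ne'))]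
  simp [Multiset.subset_iff, subset_iff, mem_dvdQuotients hd]

theorem sum_choose_card_dvdQuotients_eq (hd : 0 < d) (j : ℕ) :
    ∑ p : n.Partition, (#(dvdQuotients d p)).choose j =
      ∑ p : n.Partition, (#{i ∈ p.parts.toFinset | d ≤ p.parts.count i}).choose j := by
  simp only [← card_powersetCard]
  rw [← Finset.card_sigma, ← Finset.card_sigma]
  refine card_bij'
    (fun x hx => ⟨x.1.split x.2 ((map_mul_le_iff_subset_dvdQuotients hd).2
      (mem_powersetCard.1 (mem_sigma.1 hx).2).1), x.2⟩)
    (fun x hx => ⟨x.1.merge hd x.2 ((Multiset.nsmul_val_le_iff_subset hd.ne').2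
      (mem_powersetCard.1 (mem_sigma.1 hx).2).1), x.2⟩)
    (fun x hx => ?_) (fun x hx => ?_) (fun x hx => ?_) (fun x hx => ?_)
  · simp only [mem_sigma, mem_powersetCard, mem_univ, true_and] at hx ⊢
    exact ⟨(Multiset.nsmul_val_le_iff_subset hd.ne').1 (Multiset.le_add_left _ _), hx.2⟩
  · simp only [mem_sigma, mem_powersetCard, mem_univ, true_and] at hx ⊢
    exact ⟨(map_mul_le_iff_subset_dvdQuotients hd).1 (Multiset.le_add_left _ _), hx.2⟩
  · dsimp only
    exact Sigma.ext (merge_split hd ..) HEq.rfl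
  · dsimp only
    exact Sigma.ext (split_merge hd ..) HEq.rfl

end Nat.Partition

open scoped Classical in
theorem div_values_eq_high_multiplicity_values_general (d n k : ℕ)
    (hd : 2 ≤ d) :
    (Finset.univ.filter fun p : n.Partition =>
        (p.parts.toFinset.filter fun i => d ∣ i).card = k).card =
      (Finset.univ.filter fun p : n.Partition =>
        (p.parts.toFinset.filter fun i => d ≤ p.parts.count i).card = k).card := by
  have hd₀ : 0 < d := by omega
  simp only [← Nat.Partition.card_dvdQuotients]
  exact card_filter_eq_of_sum_choose_eq _ _ _ _
    (Nat.Partition.sum_choose_card_dvdQuotients_eq hd₀) k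

open scoped Classical in
theorem div_values_eq_high_multiplicity_values (d n k : ℕ)
    (hd : 2 ≤ d) (hn : 0 < n) (hk : 0 < k) :
    (Finset.univ.filter fun p : n.Partition =>
        (p.parts.toFinset.filter fun i => d ∣ i).card = k).card =
      (Finset.univ.filter fun p : n.Partition =>
        (p.parts.toFinset.filter fun i => d ≤ p.parts.count i).card = k).card :=
  div_values_eq_high_multiplicity_values_general d n k hd
end
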